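/- arXiv:2410.23164 — 5 statements merged into one kernel-verified Lean document; each statement's English description precedes it below -/
import Mathlib

section
/- Let x : [1, ∞) → ℝ be a positive function satisfying the linear ODE x''(t) = k·t^(−(2+α))·x(t) for all t ≥ 1, where k > 0 and α > 0 are constants. Then there exists a constant c > 0 such that x(t) ≤ c·t for all t ≥ 1. -/
/-- A positive function on `[1, ∞)` satisfying `x'' t = k * t^(-(2+α)) * x t`
with `k, α > 0` grows at most linearly. -/
theorem stmt0 (k α : ℝ) (hk : 0 < k) (hα : 0 < α) (x : ℝ → ℝ)
    (hpos : ∀ t ≥ (1:ℝ), 0 < x t)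
    (hx1 : ∀ t ≥ (1:ℝ), DifferentiableAt ℝ x t)
    (hx2 : ∀ t ≥ (1:ℝ), DifferentiableAt ℝ (deriv x) t)
    (hode : ∀ t ≥ (1:ℝ), deriv (deriv x) t = k * Real.rpow t (-(2 + α)) * x t) :
    ∃ c > 0, ∀ t ≥ (1:ℝ), x t ≤ c * t := by
  -- continuity facts
  have hcx : ContinuousOn x (Set.Ici 1) := fun t ht =>
    (hx1 t ht).continuousAt.continuousWithinAt
  have hcx' : ContinuousOn (deriv x) (Set.Ici 1) := fun t ht =>
    (hx2 t ht).continuousAt.continuousWithinAt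
  -- the RHS of the ODE is continuous on [1, ∞)
  have hrhs : ContinuousOn (fun s : ℝ => k * s ^ (-(2 + α)) * x s) (Set.Ici 1) := by
    apply ContinuousOn.mul _ hcx
    apply ContinuousOn.mul continuousOn_const
    exact continuousOn_id.rpow_const (fun s hs => Or.inl (by
      have h1 : (1:ℝ) ≤ s := hs
      simp only [id]
      intro h; rw [h] at h1; linarith))
  -- monotonicity of deriv x on [1, ∞)
  have hmono : MonotoneOn (deriv x) (Set.Ici 1) := by
    apply monotoneOn_of_deriv_nonneg (convex_Ici 1) hcx'
    · intro t ht
      rw [interior_Ici] at ht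
      exact ((hx2 t (le_of_lt ht)).differentiableWithinAt)
    · intro t ht
      rw [interior_Ici] at ht
      have ht' : (1:ℝ) ≤ t := le_of_lt ht
      rw [hode t ht']
      have h1 : (0:ℝ) < t ^ (-(2+α)) := Real.rpow_pos_of_pos (by linarith) _
      have h2 := hpos t ht'
      positivity
  -- FTC for x
  have ftc1 : ∀ a b : ℝ, 1 ≤ a → a ≤ b →
      x b - x a = ∫ s in a..b, deriv x s := by
    intro a b ha hab
    have huIcc : Set.uIcc a b = Set.Icc a b := Set.uIcc_of_le hab
    refine (intervalIntegral.integral_eq_sub_of_hasDerivAt (fun s hs => ?_) ?_).symm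
    · exact (hx1 s (le_trans ha ((huIcc ▸ hs).1))).hasDerivAt
    · exact (hcx'.mono (fun s hs => le_trans ha (huIcc ▸ hs).1)).intervalIntegrable
  -- FTC for deriv x
  have ftc2 : ∀ a b : ℝ, 1 ≤ a → a ≤ b →
      deriv x b - deriv x a = ∫ s in a..b, k * s ^ (-(2 + α)) * x s := by
    intro a b ha hab
    have huIcc : Set.uIcc a b = Set.Icc a b := Set.uIcc_of_le hab
    refine (intervalIntegral.integral_eq_sub_of_hasDerivAt (fun s hs => ?_) ?_).symm
    · have hs1 : (1:ℝ) ≤ s := le_trans ha (huIcc ▸ hs).1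
      have := (hx2 s hs1).hasDerivAt
      rwa [hode s hs1] at this
    · exact (hrhs.mono (by rw [huIcc]; exact fun s hs => le_trans ha hs.1)).intervalIntegrable
  -- choose T
  set T : ℝ := max 1 ((2 * k / α) ^ (1/α)) with hTdef
  have hT1 : (1:ℝ) ≤ T := le_max_left _ _
  have hT0 : (0:ℝ) < T := lt_of_lt_of_le one_pos hT1
  have hTsmall : k * T ^ (-α) ≤ α / 2 := by
    have h1 : (2 * k / α) ≤ T ^ α := by
      calc 2 * k / α = ((2 * k / α) ^ (1/α)) ^ α := by
            rw [one_div, Real.rpow_inv_rpow (by positivity) (ne_of_gt hα)]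
        _ ≤ T ^ α := Real.rpow_le_rpow (by positivity) (le_max_right _ _) (le_of_lt hα)
    have h2 : (0:ℝ) < T ^ α := Real.rpow_pos_of_pos hT0 _
    rw [Real.rpow_neg (le_of_lt hT0)]
    rw [mul_inv_le_iff₀ h2]
    calc k ≤ (α/2) * (2 * k / α) := le_of_eq (by field_simp)
      _ ≤ (α/2) * T ^ α := by nlinarith
  -- key integral bound : k * ∫_T^t s^(-(1+α)) ≤ 1/2
  have hintbound : ∀ t : ℝ, T ≤ t → k * (∫ s in T..t, s ^ (-(1+α))) ≤ 1/2 := by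
    intro t ht
    have h0 : (0:ℝ) ∉ Set.uIcc T t := by
      rw [Set.uIcc_of_le ht]
      intro h; exact absurd h.1 (by linarith)
    rw [integral_rpow (Or.inr ⟨by intro h; nlinarith [hα], h0⟩)]
    have : -(1+α) + 1 = -α := by ring
    rw [this]
    have ht0 : (0:ℝ) < t := lt_of_lt_of_le hT0 ht
    have h1 : (0:ℝ) < t ^ (-α) := Real.rpow_pos_of_pos ht0 _
    have h2 : (t ^ (-α) - T ^ (-α)) / (-α) ≤ T ^ (-α) / α := by
      have e : (t ^ (-α) - T ^ (-α)) / (-α) = (T ^ (-α) - t ^ (-α)) / α := by ring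
      rw [e]
      exact div_le_div_of_nonneg_right (by linarith) hα.le
    calc k * ((t ^ (-α) - T ^ (-α)) / (-α)) ≤ k * (T ^ (-α) / α) := by
          exact mul_le_mul_of_nonneg_left h2 (le_of_lt hk)
      _ = (k * T ^ (-α)) / α := by ring
      _ ≤ (α/2)/α := by
          exact div_le_div_of_nonneg_right hTsmall hα.le
      _ = 1/2 := by rw [div_div, mul_comm 2 α, ← div_div, div_self hα.ne']
  -- integrability helpers
  have hIx' : ∀ a b : ℝ, 1 ≤ a → a ≤ b → IntervalIntegrable (deriv x) MeasureTheory.volume a b := by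
    intro a b ha hab
    exact (hcx'.mono (fun s hs => le_trans ha ((Set.uIcc_of_le hab ▸ hs).1))).intervalIntegrable
  have hIrhs : ∀ a b : ℝ, 1 ≤ a → a ≤ b →
      IntervalIntegrable (fun s : ℝ => k * s ^ (-(2 + α)) * x s) MeasureTheory.volume a b := by
    intro a b ha hab
    exact (hrhs.mono (fun s hs => le_trans ha ((Set.uIcc_of_le hab ▸ hs).1))).intervalIntegrable
  have hcpow : ContinuousOn (fun s : ℝ => s ^ (-(1 + α))) (Set.Ici 1) := by
    apply ContinuousOn.rpow_const continuousOn_id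
    intro s hs
    refine Or.inl ?_
    have h1 : (1:ℝ) ≤ s := hs
    simp only [id]
    intro h; rw [h] at h1; linarith
  -- convexity-type bound
  have hconv : ∀ s : ℝ, T ≤ s → x s ≤ x T + deriv x s * (s - T) := by
    intro s hs
    have hs1 : (1:ℝ) ≤ s := le_trans hT1 hs
    have hftc := ftc1 T s hT1 hs
    have hle : (∫ u in T..s, deriv x u) ≤ ∫ _u in T..s, deriv x s := by
      apply intervalIntegral.integral_mono_on hs (hIx' T s hT1 hs) intervalIntegrable_const
      intro u hu
      exact hmono (le_trans hT1 hu.1) hs1 hu.2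
    rw [intervalIntegral.integral_const, smul_eq_mul] at hle
    nlinarith [hle]
  -- main estimate: deriv x is bounded above on [T, ∞)
  set B : ℝ := max 0 (2 * (deriv x T + x T / 2)) with hBdef
  have hBnn : (0:ℝ) ≤ B := le_max_left _ _
  have hxT : 0 < x T := hpos T hT1
  have hB : ∀ t : ℝ, T ≤ t → deriv x t ≤ B := by
    intro t ht
    have ht1 : (1:ℝ) ≤ t := le_trans hT1 ht
    set M : ℝ := max (deriv x t) 0 with hMdef
    have hMnn : (0:ℝ) ≤ M := le_max_right _ _
    have hdM : deriv x t ≤ M := le_max_left _ _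
    -- pointwise bound on the integrand
    have hpoint : ∀ s : ℝ, s ∈ Set.Icc T t →
        k * s ^ (-(2 + α)) * x s ≤ (x T + M) * (k * s ^ (-(1 + α))) := by
      intro s hs
      have hs1 : (1:ℝ) ≤ s := le_trans hT1 hs.1
      have hs0 : (0:ℝ) < s := lt_of_lt_of_le one_pos hs1
      have hp2 : (0:ℝ) < s ^ (-(2 + α)) := Real.rpow_pos_of_pos hs0 _
      have hds : deriv x s ≤ M := le_trans (hmono hs1 ht1 hs.2) hdM
      have hxs : x s ≤ x T + M * s := by
        have h1 := hconv s hs.1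
        have h2 : deriv x s * (s - T) ≤ M * s := by
          have h3 : deriv x s * (s - T) ≤ M * (s - T) :=
            mul_le_mul_of_nonneg_right hds (by linarith [hs.1])
          nlinarith [hT0]
        linarith
      have hexp : s ^ (-(2 + α)) * s = s ^ (-(1 + α)) := by
        rw [← Real.rpow_add_one (ne_of_gt hs0)]
        congr 1
        ring
      have hexple : s ^ (-(2 + α)) ≤ s ^ (-(1 + α)) :=
        Real.rpow_le_rpow_of_exponent_le hs1 (by linarith)
      calc k * s ^ (-(2 + α)) * x s ≤ k * s ^ (-(2 + α)) * (x T + M * s) := by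
            apply mul_le_mul_of_nonneg_left hxs (by positivity)
        _ = x T * (k * s ^ (-(2 + α))) + M * (k * (s ^ (-(2 + α)) * s)) := by ring
        _ ≤ x T * (k * s ^ (-(1 + α))) + M * (k * s ^ (-(1 + α))) := by
            rw [hexp]
            have := mul_le_mul_of_nonneg_left hexple hk.le
            have h5 := mul_le_mul_of_nonneg_left this hxT.le
            linarith
        _ = (x T + M) * (k * s ^ (-(1 + α))) := by ring
    -- integrate the bound
    have hIg : IntervalIntegrable (fun s : ℝ => (x T + M) * (k * s ^ (-(1 + α))))
        MeasureTheory.volume T t := by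
      apply ContinuousOn.intervalIntegrable
      apply ContinuousOn.mul continuousOn_const
      apply ContinuousOn.mul continuousOn_const
      exact hcpow.mono (fun s hs => le_trans hT1 ((Set.uIcc_of_le ht ▸ hs).1))
    have hint : deriv x t - deriv x T ≤ (x T + M) * (1/2) := by
      rw [ftc2 T t hT1 ht]
      calc (∫ s in T..t, k * s ^ (-(2 + α)) * x s)
          ≤ ∫ s in T..t, (x T + M) * (k * s ^ (-(1 + α))) := by
            apply intervalIntegral.integral_mono_on ht (hIrhs T t hT1 ht) hIg
            intro s hs; exact hpoint s hs
        _ = (x T + M) * (k * ∫ s in T..t, s ^ (-(1 + α))) := by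
            rw [← intervalIntegral.integral_const_mul, ← intervalIntegral.integral_const_mul]
        _ ≤ (x T + M) * (1/2) := by
            apply mul_le_mul_of_nonneg_left (hintbound t ht) (by linarith)
    by_cases hcase : deriv x t ≤ 0
    · linarith
    · have hM : M = deriv x t := max_eq_left (by linarith)
      rw [hM] at hint
      have : deriv x t ≤ 2 * (deriv x T + x T / 2) := by linarith
      exact le_trans this (le_max_right _ _)
  -- linear growth beyond T
  have hlin : ∀ t : ℝ, T ≤ t → x t ≤ (x T + B) * t := by
    intro t ht
    have ht1 : (1:ℝ) ≤ t := le_trans hT1 ht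
    have hftc := ftc1 T t hT1 ht
    have hle : (∫ u in T..t, deriv x u) ≤ ∫ _u in T..t, B := by
      apply intervalIntegral.integral_mono_on ht (hIx' T t hT1 ht) intervalIntegrable_const
      intro u hu; exact hB u hu.1
    rw [intervalIntegral.integral_const, smul_eq_mul] at hle
    nlinarith [hle, hT0]
  -- bound on the compact piece [1, T]
  obtain ⟨m, hmmem, hmmax⟩ := isCompact_Icc.exists_isMaxOn (Set.nonempty_Icc.2 hT1)
    (hcx.mono (Set.Icc_subset_Ici_self))
  set C0 : ℝ := x m with hC0def
  have hC0pos : 0 < C0 := lt_of_lt_of_le (hpos 1 le_rfl) (hmmax ⟨le_rfl, hT1⟩)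
  refine ⟨max C0 (x T + B), lt_of_lt_of_le hC0pos (le_max_left _ _), ?_⟩
  intro t ht
  rcases le_total t T with hcase | hcase
  · calc x t ≤ C0 := hmmax ⟨ht, hcase⟩
      _ = C0 * 1 := (mul_one _).symm
      _ ≤ max C0 (x T + B) * t := by
          apply mul_le_mul (le_max_left _ _) ht one_pos.le
          exact le_trans hC0pos.le (le_max_left _ _)
  · calc x t ≤ (x T + B) * t := hlin t hcase
      _ ≤ max C0 (x T + B) * t := by
          apply mul_le_mul_of_nonneg_right (le_max_right _ _) (by linarith)
end

section
/- Let y : [0, ∞) → ℝ be the solution of y''(t) = k·(t+1)^(−3)·y(t) with y(0) = 1 and y'(0) = 1, where k > 0. Then there exists c > 0 such that y(t) ≤ c·(t+1) for all t ≥ 0. -/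
/-!
If `φ > 0` is a supersolution, `φ'' ≥ q φ`, and `y ≥ 0` solves `y'' = q y`, then the Wronskian
`W = φ' y - φ y'` has `W' = (φ'' - q φ) y ≥ 0`; so `W ≥ 0` as soon as `W(0) ≥ 0`, and then
`(y / φ)' = -W / φ² ≤ 0`, i.e. `y ≤ (y(0) / φ(0)) φ`.

For `q = a² / (t+1)³` take `φ = (t+1) e^ψ` with `ψ = 2a (1 - (t+1)^(-1/2))`, so that
`ψ' = a (t+1)^(-3/2)` and `φ'' ≥ (t+1) ψ'² e^ψ = q φ`, while `ψ ≤ 2a` gives `φ ≤ e^(2a) (t+1)`.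
Here `φ(0) = 1 = y(0)` and `φ'(0) = 1 + a ≥ 1 = y'(0)`.
-/

open Real Set

section Comparison

variable {s : Set ℝ} {q φ φ' φ'' y y' y'' : ℝ → ℝ}

theorem monotoneOn_wronskian_of_supersolution (hs : Convex ℝ s)
    (hφ : ∀ t ∈ s, HasDerivAt φ (φ' t) t) (hφ' : ∀ t ∈ s, HasDerivAt φ' (φ'' t) t)
    (hy : ∀ t ∈ s, HasDerivAt y (y' t) t) (hy' : ∀ t ∈ s, HasDerivAt y' (y'' t) t)
    (hy_nonneg : ∀ t ∈ s, 0 ≤ y t) (hsuper : ∀ t ∈ s, q t * φ t ≤ φ'' t)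
    (hode : ∀ t ∈ s, y'' t = q t * y t) :
    MonotoneOn (fun t => φ' t * y t - φ t * y' t) s := by
  have hW : ∀ t ∈ s, HasDerivAt (fun t => φ' t * y t - φ t * y' t)
      ((φ'' t - q t * φ t) * y t) t := fun t ht => by
    refine (((hφ' t ht).mul (hy t ht)).sub ((hφ t ht).mul (hy' t ht))).congr_deriv ?_
    rw [hode t ht]
    ring
  refine monotoneOn_of_hasDerivWithinAt_nonneg hs
    (fun t ht => (hW t ht).continuousAt.continuousWithinAt)
    (fun t ht => (hW t (interior_subset ht)).hasDerivWithinAt) fun t ht => ?_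
  have ht := interior_subset ht
  exact mul_nonneg (sub_nonneg.2 (hsuper t ht)) (hy_nonneg t ht)

theorem antitoneOn_div_of_wronskian_nonneg (hs : Convex ℝ s)
    (hφ : ∀ t ∈ s, HasDerivAt φ (φ' t) t) (hy : ∀ t ∈ s, HasDerivAt y (y' t) t)
    (hφ_pos : ∀ t ∈ s, 0 < φ t) (hW : ∀ t ∈ s, φ t * y' t ≤ φ' t * y t) :
    AntitoneOn (fun t => y t / φ t) s := by
  have hquot : ∀ t ∈ s, HasDerivAt (fun t => y t / φ t)
      ((y' t * φ t - y t * φ' t) / φ t ^ 2) t := fun t ht =>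
    (hy t ht).div (hφ t ht) (hφ_pos t ht).ne'
  refine antitoneOn_of_hasDerivWithinAt_nonpos hs
    (fun t ht => (hquot t ht).continuousAt.continuousWithinAt)
    (fun t ht => (hquot t (interior_subset ht)).hasDerivWithinAt) fun t ht => ?_
  have ht := interior_subset ht
  exact div_nonpos_of_nonpos_of_nonneg (by linarith [hW t ht]) (sq_nonneg _)

theorem antitoneOn_div_of_supersolution (t₀ : ℝ)
    (hφ : ∀ t ∈ Ici t₀, HasDerivAt φ (φ' t) t) (hφ' : ∀ t ∈ Ici t₀, HasDerivAt φ' (φ'' t) t)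
    (hy : ∀ t ∈ Ici t₀, HasDerivAt y (y' t) t) (hy' : ∀ t ∈ Ici t₀, HasDerivAt y' (y'' t) t)
    (hφ_pos : ∀ t ∈ Ici t₀, 0 < φ t) (hy_nonneg : ∀ t ∈ Ici t₀, 0 ≤ y t)
    (hsuper : ∀ t ∈ Ici t₀, q t * φ t ≤ φ'' t) (hode : ∀ t ∈ Ici t₀, y'' t = q t * y t)
    (h₀ : φ t₀ * y' t₀ ≤ φ' t₀ * y t₀) :
    AntitoneOn (fun t => y t / φ t) (Ici t₀) := by
  refine antitoneOn_div_of_wronskian_nonneg (convex_Ici t₀) hφ hy hφ_pos fun t ht => ?_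
  have := monotoneOn_wronskian_of_supersolution (convex_Ici t₀) hφ hφ' hy hy' hy_nonneg hsuper
    hode self_mem_Ici ht ht
  linarith

end Comparison

noncomputable section Barrier

def barrierExponent (a t : ℝ) : ℝ := 2 * a * (1 - (t + 1) ^ (-(1 / 2) : ℝ))

def barrier (a t : ℝ) : ℝ := (t + 1) * exp (barrierExponent a t)

def barrier' (a t : ℝ) : ℝ := exp (barrierExponent a t) * (1 + a * (t + 1) ^ (-(1 / 2) : ℝ))

def barrier'' (a t : ℝ) : ℝ :=
  exp (barrierExponent a t) * (a / 2 * (t + 1) ^ (-(3 / 2) : ℝ) + a ^ 2 / (t + 1) ^ 2)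

variable {a t : ℝ}

theorem hasDerivAt_shifted_rpow (p : ℝ) (ht : 0 < t + 1) :
    HasDerivAt (fun t => (t + 1) ^ p) (p * (t + 1) ^ (p - 1)) t := by
  simpa using ((hasDerivAt_id t).add_const 1).rpow_const (p := p) (Or.inl ht.ne')

theorem hasDerivAt_barrierExponent (ht : 0 < t + 1) :
    HasDerivAt (barrierExponent a) (a * (t + 1) ^ (-(3 / 2) : ℝ)) t := by
  refine (((hasDerivAt_shifted_rpow (-(1 / 2)) ht).const_sub 1).const_mul (2 * a)).congr_deriv ?_
  norm_num
  ring

theorem hasDerivAt_barrier (ht : 0 < t + 1) : HasDerivAt (barrier a) (barrier' a t) t := by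
  refine (((hasDerivAt_id t).add_const 1).mul
    (hasDerivAt_barrierExponent (a := a) ht).exp).congr_deriv ?_
  have : (t + 1) * (t + 1) ^ (-(3 / 2) : ℝ) = (t + 1) ^ (-(1 / 2) : ℝ) := by
    rw [← rpow_one_add' ht.le (by norm_num)]
    norm_num
  simp only [barrier', id]
  linear_combination (a * exp (barrierExponent a t)) * this

theorem hasDerivAt_barrier' (ht : 0 < t + 1) : HasDerivAt (barrier' a) (barrier'' a t) t := by
  refine ((hasDerivAt_barrierExponent (a := a) ht).exp.mul
    (((hasDerivAt_shifted_rpow (-(1 / 2)) ht).const_mul a).const_add 1)).congr_deriv ?_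
  have : (t + 1) ^ (-(1 / 2) : ℝ) * (t + 1) ^ (-(3 / 2) : ℝ) = 1 / (t + 1) ^ 2 := by
    rw [← rpow_add ht, show (-(1 / 2) + -(3 / 2) : ℝ) = -(2 : ℕ) by norm_num, rpow_neg ht.le,
      rpow_natCast, one_div]
  rw [show (-(1 / 2) : ℝ) - 1 = -(3 / 2) by norm_num, barrier'']
  linear_combination (a ^ 2 * exp (barrierExponent a t)) * this

theorem barrier_pos (ht : 0 < t + 1) : 0 < barrier a t := by
  unfold barrier
  positivity

theorem barrier_zero : barrier a 0 = 1 := by simp [barrier, barrierExponent]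

theorem barrier'_zero : barrier' a 0 = 1 + a := by simp [barrier', barrierExponent]

theorem barrier_le (ha : 0 ≤ a) (ht : 0 < t + 1) : barrier a t ≤ exp (2 * a) * (t + 1) := by
  have : barrierExponent a t ≤ 2 * a := by
    unfold barrierExponent
    nlinarith [rpow_nonneg ht.le (-(1 / 2) : ℝ)]
  rw [barrier, mul_comm]
  gcongr

theorem barrier_supersolution (ha : 0 ≤ a) (ht : 0 < t + 1) :
    a ^ 2 / (t + 1) ^ 3 * barrier a t ≤ barrier'' a t := by
  have : a ^ 2 / (t + 1) ^ 3 * barrier a t =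
      exp (barrierExponent a t) * (a ^ 2 / (t + 1) ^ 2) := by
    rw [barrier]
    field_simp
  rw [this, barrier'']
  gcongr
  exact le_add_of_nonneg_left (by positivity)

end Barrier

/-- The solution of `y'' = k (t+1)^(-3) y`, `y 0 = 1`, `y' 0 = 1` with `k > 0`
satisfies `y t ≤ c (t+1)` for some `c > 0` and all `t ≥ 0`. -/
theorem stmt1 (k : ℝ) (hk : 0 < k) (y : ℝ → ℝ)
    (hpos : ∀ t ≥ (0:ℝ), 0 < y t)
    (hy1 : ∀ t ≥ (0:ℝ), DifferentiableAt ℝ y t)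
    (hy2 : ∀ t ≥ (0:ℝ), DifferentiableAt ℝ (deriv y) t)
    (hode : ∀ t ≥ (0:ℝ), deriv (deriv y) t = k / (t + 1) ^ 3 * y t)
    (hy0 : y 0 = 1) (hy'0 : deriv y 0 = 1) :
    ∃ c > 0, ∀ t ≥ (0:ℝ), y t ≤ c * (t + 1) := by
  set a := √k
  have ha : 0 ≤ a := sqrt_nonneg k
  have hka : a ^ 2 = k := sq_sqrt hk.le
  have hshift : ∀ t ∈ Ici (0:ℝ), 0 < t + 1 := fun t ht => by linarith [mem_Ici.1 ht]
  have hanti := antitoneOn_div_of_supersolution (q := fun t => k / (t + 1) ^ 3) 0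
    (fun t ht => hasDerivAt_barrier (hshift t ht)) (fun t ht => hasDerivAt_barrier' (hshift t ht))
    (fun t ht => (hy1 t ht).hasDerivAt) (fun t ht => (hy2 t ht).hasDerivAt)
    (fun t ht => barrier_pos (hshift t ht)) (fun t ht => (hpos t ht).le)
    (fun t ht => hka ▸ barrier_supersolution ha (hshift t ht)) hode
    (by rw [barrier_zero, barrier'_zero, hy0, hy'0]; linarith)
  refine ⟨exp (2 * a), exp_pos _, fun t ht => ?_⟩
  have hle : y t / barrier a t ≤ y 0 / barrier a 0 := hanti self_mem_Ici ht ht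
  rw [hy0, barrier_zero, div_one, div_le_one (barrier_pos (hshift t ht))] at hle
  exact hle.trans (barrier_le ha (hshift t ht))
end

section
/- Comparison principle for Jacobi-type equations: let J : [0, ∞) → E be a C² curve in a finite-dimensional real inner product space E satisfying ‖J''(t)‖ ≤ k·(t+1)^(−3)·‖J(t)‖ for all t ≥ 0, and let y : [0, ∞) → ℝ be a solution of y''(t) = k·(t+1)^(−3)·y(t) with ‖J(0)‖ ≤ y(0) and ‖J'(0)‖ ≤ y'(0). Then ‖J(t)‖ ≤ y(t) for all t ≥ 0. -/
/-!
With `g t = k / (t + 1) ^ 3 ≤ K = k`, write `p = (‖J‖ - y)⁺`, `q = (‖J'‖ - y')⁺` and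
`v(t) = ∫ₐᵗ (p + q)`. Fencing `J` by `y + v` and `J'` by `y' + K v` (the excess of
`‖J''‖ ≤ g ‖J‖` over `y'' = g y` is at most `g p ≤ K (p + q)`) gives `p + q ≤ (1 + K) v`,
that is `v' ≤ (1 + K) v` with `v(a) = 0`, so `v = 0` by Grönwall.
-/

open Set intervalIntegral

theorem eqOn_zero_of_le_const_mul_integral {u : ℝ → ℝ} {a b C : ℝ} (hu : Continuous u)
    (hu0 : ∀ t ∈ Icc a b, 0 ≤ u t) (hle : ∀ t ∈ Icc a b, u t ≤ C * ∫ s in a..t, u s) :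
    EqOn u 0 (Icc a b) := by
  set v : ℝ → ℝ := fun t => ∫ s in a..t, u s
  have hv : ∀ t, HasDerivAt v (u t) t := fun t => (hu.integral_hasStrictDerivAt a t).hasDerivAt
  have hv0 : ∀ t ∈ Icc a b, 0 ≤ v t := fun t ht =>
    integral_nonneg ht.1 fun s hs => hu0 s ⟨hs.1, hs.2.trans ht.2⟩
  have hv_le : ∀ t ∈ Icc a b, ‖v t‖ ≤ gronwallBound 0 C 0 (t - a) :=
    norm_le_gronwallBound_of_norm_deriv_right_le (fun t _ => (hv t).continuousAt.continuousWithinAt)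
      (fun t _ => (hv t).hasDerivWithinAt) (by simp [v]) fun t ht => by
        rw [Real.norm_of_nonneg (hu0 t (Ico_subset_Icc_self ht)),
          Real.norm_of_nonneg (hv0 t (Ico_subset_Icc_self ht)), add_zero]
        exact hle t (Ico_subset_Icc_self ht)
  intro t ht
  have hvt : ∫ s in a..t, u s = 0 :=
    norm_le_zero_iff.1 (by simpa [gronwallBound_ε0_δ0] using hv_le t ht)
  exact le_antisymm (by simpa [hvt] using hle t ht) (hu0 t ht)

section

variable {E : Type*} [NormedAddCommGroup E] [NormedSpace ℝ E]

theorem norm_le_of_norm_deriv_le_deriv_Icc {f f' : ℝ → E} {B B' : ℝ → ℝ} {a b : ℝ}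
    (hf : ∀ t ∈ Icc a b, HasDerivAt f (f' t) t) (hB : ∀ t ∈ Icc a b, HasDerivAt B (B' t) t)
    (ha : ‖f a‖ ≤ B a) (bound : ∀ t ∈ Icc a b, ‖f' t‖ ≤ B' t) :
    ∀ t ∈ Icc a b, ‖f t‖ ≤ B t :=
  image_norm_le_of_norm_deriv_right_le_deriv_boundary'
    (fun t ht => (hf t ht).continuousAt.continuousWithinAt)
    (fun t ht => (hf t (Ico_subset_Icc_self ht)).hasDerivWithinAt) ha
    (fun t ht => (hB t ht).continuousAt.continuousWithinAt)
    (fun t ht => (hB t (Ico_subset_Icc_self ht)).hasDerivWithinAt)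
    fun t ht => bound t (Ico_subset_Icc_self ht)

theorem norm_le_of_norm_deriv_deriv_le_mul_norm {J J' J'' : ℝ → E} {y y' g : ℝ → ℝ}
    {a b K : ℝ} (hJ : ∀ t ∈ Icc a b, HasDerivAt J (J' t) t)
    (hJ' : ∀ t ∈ Icc a b, HasDerivAt J' (J'' t) t) (hy : ∀ t ∈ Icc a b, HasDerivAt y (y' t) t)
    (hy' : ∀ t ∈ Icc a b, HasDerivAt y' (g t * y t) t)
    (hg0 : ∀ t ∈ Icc a b, 0 ≤ g t) (hgK : ∀ t ∈ Icc a b, g t ≤ K)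
    (hJ'' : ∀ t ∈ Icc a b, ‖J'' t‖ ≤ g t * ‖J t‖) (ha : ‖J a‖ ≤ y a) (ha' : ‖J' a‖ ≤ y' a) :
    ∀ t ∈ Icc a b, ‖J t‖ ≤ y t ∧ ‖J' t‖ ≤ y' t := by
  intro t ht
  have hab : a ≤ b := ht.1.trans ht.2
  have hK : 0 ≤ K := (hg0 a (left_mem_Icc.2 hab)).trans (hgK a (left_mem_Icc.2 hab))
  set p : ℝ → ℝ := fun s => max (‖J s‖ - y s) 0
  set q : ℝ → ℝ := fun s => max (‖J' s‖ - y' s) 0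
  have hpq : ContinuousOn (p + q) (Icc a b) := fun s hs =>
    ((((hJ s hs).continuousAt.norm.sub (hy s hs).continuousAt).sup continuousAt_const).add
      (((hJ' s hs).continuousAt.norm.sub (hy' s hs).continuousAt).sup
        continuousAt_const)).continuousWithinAt
  -- extend `p + q` continuously beyond `[a, b]`, so that its primitive is differentiable
  set u : ℝ → ℝ := fun s => (p + q) (projIcc a b hab s)
  have hu : Continuous u :=
    hpq.comp_continuous (continuous_subtype_val.comp continuous_projIcc) fun s => (projIcc a b hab s).2
  have hu_eq : ∀ s ∈ Icc a b, u s = p s + q s := fun s hs => by simp [u, projIcc_of_mem hab hs]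
  set v : ℝ → ℝ := fun s => ∫ r in a..s, u r
  have hv : ∀ s, HasDerivAt v (u s) s := fun s => (hu.integral_hasStrictDerivAt a s).hasDerivAt
  have hv0 : ∀ s ∈ Icc a b, 0 ≤ v s := fun s hs => integral_nonneg hs.1 fun r hr => by
    rw [hu_eq r ⟨hr.1, hr.2.trans hs.2⟩]; positivity
  have hJv : ∀ s ∈ Icc a b, ‖J s‖ ≤ y s + v s :=
    norm_le_of_norm_deriv_le_deriv_Icc hJ (fun s hs => (hy s hs).add (hv s)) (by simpa [v] using ha)
      fun s hs => by
        rw [hu_eq s hs]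
        linarith [le_max_left (‖J' s‖ - y' s) 0, le_max_right (‖J s‖ - y s) 0]
  have hJ'v : ∀ s ∈ Icc a b, ‖J' s‖ ≤ y' s + K * v s :=
    norm_le_of_norm_deriv_le_deriv_Icc hJ' (fun s hs => (hy' s hs).add ((hv s).const_mul K))
      (by simpa [v] using ha') fun s hs => by
        rw [hu_eq s hs]
        calc ‖J'' s‖ ≤ g s * ‖J s‖ := hJ'' s hs
          _ ≤ g s * (y s + p s) := by
            gcongr
            exacts [hg0 s hs, by linarith [le_max_left (‖J s‖ - y s) 0]]
          _ ≤ g s * y s + K * (p s + q s) := by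
            nlinarith [hgK s hs, hg0 s hs, le_max_right (‖J s‖ - y s) 0,
              le_max_right (‖J' s‖ - y' s) 0]
  have hu_zero : EqOn u 0 (Icc a b) := eqOn_zero_of_le_const_mul_integral hu
    (fun s hs => by rw [hu_eq s hs]; positivity) fun s hs => by
      rw [hu_eq s hs]
      show p s + q s ≤ (1 + K) * v s
      rw [add_mul, one_mul]
      exact add_le_add (max_le (by linarith [hJv s hs]) (hv0 s hs))
        (max_le (by linarith [hJ'v s hs]) (mul_nonneg hK (hv0 s hs)))
  have hpq_zero : p t + q t = 0 := hu_eq t ht ▸ hu_zero ht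
  simp only [p, q] at hpq_zero
  constructor <;> linarith [le_max_left (‖J t‖ - y t) 0, le_max_left (‖J' t‖ - y' t) 0,
    le_max_right (‖J t‖ - y t) 0, le_max_right (‖J' t‖ - y' t) 0]

end

theorem stmt2_general {E : Type*} [NormedAddCommGroup E] [InnerProductSpace ℝ E]
    (k : ℝ) (hk : 0 < k) (J J' : ℝ → E) (y y' : ℝ → ℝ)
    (hJ1 : ∀ t ≥ (0:ℝ), HasDerivAt J (J' t) t)
    (hJ2 : ∀ t ≥ (0:ℝ), DifferentiableAt ℝ J' t)
    (hJbound : ∀ t ≥ (0:ℝ), ‖deriv J' t‖ ≤ k / (t + 1) ^ 3 * ‖J t‖)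
    (hy1 : ∀ t ≥ (0:ℝ), HasDerivAt y (y' t) t)
    (hy2 : ∀ t ≥ (0:ℝ), HasDerivAt y' (k / (t + 1) ^ 3 * y t) t)
    (h0 : ‖J 0‖ ≤ y 0) (h0' : ‖J' 0‖ ≤ y' 0) :
    ∀ t ≥ (0:ℝ), ‖J t‖ ≤ y t := fun t ht =>
  (norm_le_of_norm_deriv_deriv_le_mul_norm (g := fun s => k / (s + 1) ^ 3) (K := k)
    (fun s hs => hJ1 s hs.1) (fun s hs => (hJ2 s hs.1).hasDerivAt) (fun s hs => hy1 s hs.1)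
    (fun s hs => hy2 s hs.1) (fun s hs => div_nonneg hk.le (pow_nonneg (by linarith [hs.1]) 3))
    (fun s hs => div_le_self hk.le (one_le_pow₀ (by linarith [hs.1])))
    (fun s hs => hJbound s hs.1) h0 h0' t ⟨ht, le_rfl⟩).1

/-- Comparison principle for Jacobi-type equations. -/
theorem stmt2 {E : Type*} [NormedAddCommGroup E] [InnerProductSpace ℝ E]
    [FiniteDimensional ℝ E]
    (k : ℝ) (hk : 0 < k) (J J' : ℝ → E) (y y' : ℝ → ℝ)
    (hJ1 : ∀ t ≥ (0:ℝ), HasDerivAt J (J' t) t)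
    (hJ2 : ∀ t ≥ (0:ℝ), DifferentiableAt ℝ J' t)
    (hJ'cont : Continuous J')
    (hJbound : ∀ t ≥ (0:ℝ), ‖deriv J' t‖ ≤ k / (t + 1) ^ 3 * ‖J t‖)
    (hy1 : ∀ t ≥ (0:ℝ), HasDerivAt y (y' t) t)
    (hy2 : ∀ t ≥ (0:ℝ), HasDerivAt y' (k / (t + 1) ^ 3 * y t) t)
    (hypos : ∀ t ≥ (0:ℝ), 0 < y t)
    (h0 : ‖J 0‖ ≤ y 0) (h0' : ‖J' 0‖ ≤ y' 0) :
    ∀ t ≥ (0:ℝ), ‖J t‖ ≤ y t :=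
  stmt2_general k hk J J' y y' hJ1 hJ2 hJbound hy1 hy2 h0 h0'
end

section
/- Let h > 0, a ≠ 0 with ‖a‖ = √(2h), β ∈ (0,1), and suppose x, y, z belong to the cone C_a(β) in a real inner product space with ‖x‖ = ‖z‖ = ρ and ‖y‖ = λρ for λ ∈ (0,1). If φ_h(x,y) ≥ √(2h)‖y−x‖, φ_h(y,z) ≥ √(2h)‖z−y‖, and φ_h(x,z) ≤ √(2h)‖z−x‖ + m for a constant m > 0, then φ_h(x,y) + φ_h(y,z) − φ_h(x,z) > 2√(2h)·((1 − √(1−β²)) − λ)·ρ − m. -/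
/-!
Every vector `w` of the cone `C_a(β)` lies within `√(1 - β²) ‖w‖` of the point `β ‖w‖ a / ‖a‖`
on the axis, so two cone vectors of norm `ρ` are at distance at most `2ρ√(1 - β²)`. Each leg
`‖y - x‖`, `‖z - y‖` is at least `(1 - λ)ρ`, and by strict convexity both bounds are attained
only if `y` lies on the rays of both `x` and `z`, forcing `x = z`; when `x = z` the cone bound
is strict instead. Multiplying the strict triangle excess by `√(2h)` and inserting the three
bounds on `φ_h` gives the claim.
-/

open RealInnerProductSpace

section StrictConvex

variable {F : Type*} [NormedAddCommGroup F] [NormedSpace ℝ F] [StrictConvexSpace ℝ F]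

lemma sameRay_of_norm_sub_eq_sub_norm {x y : F} (h : ‖x - y‖ = ‖x‖ - ‖y‖) : SameRay ℝ x y := by
  rw [sameRay_iff_norm_sub, h, abs_of_nonneg (h ▸ norm_nonneg _)]

lemma two_mul_sub_norm_lt_norm_sub_add_norm_sub {x y z : F} (hxz : x ≠ z) (hnorm : ‖x‖ = ‖z‖)
    (hy : y ≠ 0) : 2 * (‖x‖ - ‖y‖) < ‖y - x‖ + ‖z - y‖ := by
  have hxy : ‖x‖ - ‖y‖ ≤ ‖x - y‖ := norm_sub_norm_le x y
  have hzy : ‖z‖ - ‖y‖ ≤ ‖z - y‖ := norm_sub_norm_le z y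
  rw [norm_sub_rev y x]
  by_contra! hle
  have rxy := sameRay_of_norm_sub_eq_sub_norm (x := x) (y := y) (by linarith)
  have rzy := sameRay_of_norm_sub_eq_sub_norm (x := z) (y := y) (by linarith)
  have hx : x ≠ 0 := by
    rintro rfl
    exact hxz (norm_eq_zero.mp (by rw [← hnorm, norm_zero])).symm
  have hz : z ≠ 0 := by rwa [← norm_ne_zero_iff, ← hnorm, norm_ne_zero_iff]
  rw [sameRay_iff_inv_norm_smul_eq_of_ne hx hy] at rxy
  rw [sameRay_iff_inv_norm_smul_eq_of_ne hz hy, ← hnorm, ← rxy] at rzy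
  exact hxz (smul_right_injective F (inv_ne_zero (norm_ne_zero_iff.mpr hx)) rzy.symm)

end StrictConvex

section Cone

variable {E : Type*} [NormedAddCommGroup E] [InnerProductSpace ℝ E]

def cone (a : E) (β : ℝ) : Set E := {w | β * ‖w‖ * ‖a‖ ≤ ⟪w, a⟫}

lemma norm_sub_axis_le_of_mem_cone {a w : E} {β : ℝ} (ha : a ≠ 0) (hβ : 0 ≤ β)
    (hw : w ∈ cone a β) : ‖w - (β * ‖w‖ / ‖a‖) • a‖ ≤ √(1 - β ^ 2) * ‖w‖ := by
  have hna : 0 < ‖a‖ := norm_pos_iff.mpr ha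
  have hc : 0 ≤ β * ‖w‖ / ‖a‖ := by positivity
  have hsq : ‖w - (β * ‖w‖ / ‖a‖) • a‖ ^ 2 ≤ (1 - β ^ 2) * ‖w‖ ^ 2 := by
    have hinner : β * ‖w‖ / ‖a‖ * (β * ‖w‖ * ‖a‖) ≤ β * ‖w‖ / ‖a‖ * ⟪w, a⟫ :=
      mul_le_mul_of_nonneg_left hw hc
    rw [norm_sub_sq_real, real_inner_smul_right, norm_smul, Real.norm_of_nonneg hc]
    field_simp at hinner ⊢
    nlinarith
  calc ‖w - (β * ‖w‖ / ‖a‖) • a‖ ≤ √((1 - β ^ 2) * ‖w‖ ^ 2) := Real.le_sqrt_of_sq_le hsq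
    _ = √(1 - β ^ 2) * ‖w‖ := by rw [Real.sqrt_mul' _ (sq_nonneg _), Real.sqrt_sq (norm_nonneg w)]

lemma norm_sub_le_of_mem_cone {a x z : E} {β : ℝ} (ha : a ≠ 0) (hβ : 0 ≤ β)
    (hx : x ∈ cone a β) (hz : z ∈ cone a β) (hnorm : ‖x‖ = ‖z‖) :
    ‖z - x‖ ≤ 2 * √(1 - β ^ 2) * ‖x‖ := by
  have hx' := norm_sub_axis_le_of_mem_cone ha hβ hx
  have hz' := norm_sub_axis_le_of_mem_cone ha hβ hz
  rw [← hnorm] at hz'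
  calc ‖z - x‖ ≤ ‖z - (β * ‖x‖ / ‖a‖) • a‖ + ‖(β * ‖x‖ / ‖a‖) • a - x‖ :=
        norm_sub_le_norm_sub_add_norm_sub _ _ _
    _ ≤ 2 * √(1 - β ^ 2) * ‖x‖ := by rw [norm_sub_rev _ x]; linarith

lemma triangle_excess_gt_of_mem_cone {a x y z : E} {β ρ lam : ℝ} (ha : a ≠ 0)
    (hβ0 : 0 ≤ β) (hβ1 : β < 1) (hρ : 0 < ρ) (hlam : 0 < lam)
    (hx : x ∈ cone a β) (hz : z ∈ cone a β)
    (hxn : ‖x‖ = ρ) (hzn : ‖z‖ = ρ) (hyn : ‖y‖ = lam * ρ) :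
    2 * ((1 - √(1 - β ^ 2)) - lam) * ρ < ‖y - x‖ + ‖z - y‖ - ‖z - x‖ := by
  have hcone := norm_sub_le_of_mem_cone ha hβ0 hx hz (hxn.trans hzn.symm)
  rw [hxn] at hcone
  by_cases hxz : x = z
  · subst hxz
    have hs : 0 < √(1 - β ^ 2) := Real.sqrt_pos.mpr (by nlinarith)
    have hleg := norm_sub_norm_le x y
    rw [hxn, hyn] at hleg
    rw [sub_self, norm_zero, sub_zero, norm_sub_rev y x]
    linarith [mul_pos hs hρ]
  · have hy : y ≠ 0 := by rw [← norm_ne_zero_iff, hyn]; positivity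
    have hlegs := two_mul_sub_norm_lt_norm_sub_add_norm_sub hxz (hxn.trans hzn.symm) hy
    rw [hxn, hyn] at hlegs
    linarith

end Cone

theorem stmt11_general {E : Type*} [NormedAddCommGroup E] [InnerProductSpace ℝ E]
    (h : ℝ) (hh : 0 < h) (a : E) (ha : a ≠ 0)
    (β : ℝ) (hβ : β ∈ Set.Ioo (0:ℝ) 1)
    (x y z : E) (ρ lam m : ℝ) (hρ : 0 < ρ) (hlam : lam ∈ Set.Ioo (0:ℝ) 1)
    (hx : ⟪x, a⟫ ≥ β * ‖x‖ * ‖a‖)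
    (hz : ⟪z, a⟫ ≥ β * ‖z‖ * ‖a‖)
    (hxn : ‖x‖ = ρ) (hzn : ‖z‖ = ρ) (hyn : ‖y‖ = lam * ρ)
    (φ : E → E → ℝ)
    (hφ1 : φ x y ≥ Real.sqrt (2 * h) * ‖y - x‖)
    (hφ2 : φ y z ≥ Real.sqrt (2 * h) * ‖z - y‖)
    (hφ3 : φ x z ≤ Real.sqrt (2 * h) * ‖z - x‖ + m) :
    φ x y + φ y z - φ x z >
      2 * Real.sqrt (2 * h) * ((1 - Real.sqrt (1 - β ^ 2)) - lam) * ρ - m := by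
  have hK : 0 < Real.sqrt (2 * h) := Real.sqrt_pos.mpr (by positivity)
  have hexcess := mul_lt_mul_of_pos_left
    (triangle_excess_gt_of_mem_cone ha hβ.1.le hβ.2 hρ hlam.1 hx hz hxn hzn hyn) hK
  linarith

/-- Lower bound for the excess of the action potential `φ_h` in a cone. -/
theorem stmt11 {E : Type*} [NormedAddCommGroup E] [InnerProductSpace ℝ E]
    (h : ℝ) (hh : 0 < h) (a : E) (ha : a ≠ 0) (hna : ‖a‖ = Real.sqrt (2 * h))
    (β : ℝ) (hβ : β ∈ Set.Ioo (0:ℝ) 1)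
    (x y z : E) (ρ lam m : ℝ) (hρ : 0 < ρ) (hlam : lam ∈ Set.Ioo (0:ℝ) 1)
    (hm : 0 < m)
    (hx : ⟪x, a⟫ ≥ β * ‖x‖ * ‖a‖)
    (hy : ⟪y, a⟫ ≥ β * ‖y‖ * ‖a‖)
    (hz : ⟪z, a⟫ ≥ β * ‖z‖ * ‖a‖)
    (hxn : ‖x‖ = ρ) (hzn : ‖z‖ = ρ) (hyn : ‖y‖ = lam * ρ)
    (φ : E → E → ℝ)
    (hφ1 : φ x y ≥ Real.sqrt (2 * h) * ‖y - x‖)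
    (hφ2 : φ y z ≥ Real.sqrt (2 * h) * ‖z - y‖)
    (hφ3 : φ x z ≤ Real.sqrt (2 * h) * ‖z - x‖ + m) :
    φ x y + φ y z - φ x z >
      2 * Real.sqrt (2 * h) * ((1 - Real.sqrt (1 - β ^ 2)) - lam) * ρ - m :=
  stmt11_general h hh a ha β hβ x y z ρ lam m hρ hlam hx hz hxn hzn hyn φ hφ1 hφ2 hφ3
end

section
/- Quadratic superdifferentiability from calibration: let E be a real inner product space, U : Ω → ℝ a C² function on an open set Ω ⊆ E, B̄(x,δ) ⊆ Ω a closed ball, and suppose all calibrating motions within B̄(x,δ) have speed at most A. Let γ : (−∞,0] → Ω be a C² solution of γ'' = ∇U(γ) with γ(0) = y ∈ B̄(x, δ/4), and let z ∈ B̄(x, δ/4). Define γ_z(t) = γ(t) + ((t+ε)/ε)(z−y) on [−ε,0] with ε = (δ/4)/A, and γ_z = γ on (−∞,−ε]. If u satisfies u(z) − u(γ(−ε)) ≤ ∫_{−ε}^0 (½‖γ_z'‖² + U(γ_z) + h) dt and u(y) − u(γ(−ε)) = ∫_{−ε}^0 (½‖γ'‖² + U(γ) + h) dt, then there is K > 0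 (depending only on δ, A, and sup of ‖Hess U‖ on B̄(x,δ)) such that u(z) − u(y) ≤ ⟨γ'(0), z − y⟩ + K‖z − y‖². -/
/-!
Put `w = z - γ 0`, `s(t) = (t + ε) / ε` and compare the action of `γ` on `[-ε, 0]` with that of
the competitor `γ + s • w`. Expanding the kinetic term and Taylor-expanding `U` to second order
(with `M` a bound for `D²U` on the ball), the difference of the Lagrangians is at most
`ε⁻¹ ⟪γ', w⟫ + s ⟪∇U(γ), w⟫ + (ε⁻² / 2 + M) ‖w‖²`. Since `γ'' = ∇U(γ)`, the first two terms are
the derivative of `s ⟪γ', w⟫`, so they integrate to `⟪γ' 0, w⟫`. Subtracting the calibration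
identity for `γ` from the domination inequality for `z` gives the estimate with
`K = 1 / (2ε) + M ε`. The speed bound keeps both curves inside the ball where `M` is valid.
-/

open RealInnerProductSpace MeasureTheory intervalIntegral Set Metric

theorem Convex.sub_le_fderiv_add_mul_sq {E : Type*} [NormedAddCommGroup E] [NormedSpace ℝ E]
    {f : E → ℝ} {f' : E → E →L[ℝ] ℝ} {f'' : E → E →L[ℝ] E →L[ℝ] ℝ} {s : Set E} {M : ℝ}
    {a b : E} (hs : Convex ℝ s) (hf : ∀ y ∈ s, HasFDerivWithinAt f (f' y) s y)
    (hf' : ∀ y ∈ s, HasFDerivWithinAt f' (f'' y) s y) (hM : ∀ y ∈ s, ‖f'' y‖ ≤ M)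
    (ha : a ∈ s) (hb : b ∈ s) :
    f b - f a ≤ f' a (b - a) + M * ‖b - a‖ ^ 2 := by
  have hseg : segment ℝ a b ⊆ s := hs.segment_subset ha hb
  have hf'_near : ∀ y ∈ segment ℝ a b, ‖f' y - f' a‖ ≤ M * ‖b - a‖ := fun y hy => calc
    ‖f' y - f' a‖ ≤ M * ‖y - a‖ :=
      hs.norm_image_sub_le_of_norm_hasFDerivWithin_le hf' hM ha (hseg hy)
    _ ≤ M * ‖b - a‖ := by
      gcongr
      · exact (norm_nonneg (f'' a)).trans (hM a ha)
      · rw [← dist_eq_norm, ← dist_eq_norm, dist_comm y, dist_comm b]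
        linarith [dist_add_dist_of_mem_segment hy, dist_nonneg (x := y) (y := b)]
  have := (convex_segment a b).norm_image_sub_le_of_norm_hasFDerivWithin_le'
    (fun y hy => (hf y (hseg hy)).mono hseg) hf'_near (left_mem_segment ℝ a b)
    (right_mem_segment ℝ a b)
  linarith [le_abs_self (f b - f a - f' a (b - a)), Real.norm_eq_abs (f b - f a - f' a (b - a))]

theorem ContDiffOn.exists_sub_le_fderiv_add_mul_sq {E : Type*} [NormedAddCommGroup E]
    [NormedSpace ℝ E] {U : E → ℝ} {Ω K : Set E} (hU : ContDiffOn ℝ 2 U Ω) (hΩ : IsOpen Ω)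
    (hK : IsCompact K) (hKconv : Convex ℝ K) (hKΩ : K ⊆ Ω) :
    ∃ M ≥ 0, ∀ a ∈ K, ∀ b ∈ K, U b - U a ≤ fderiv ℝ U a (b - a) + M * ‖b - a‖ ^ 2 := by
  have hU' : ContDiffOn ℝ 1 (fderiv ℝ U) Ω := hU.fderiv_of_isOpen hΩ (by norm_num)
  obtain ⟨M, hM⟩ := hK.exists_bound_of_continuousOn
    ((hU'.continuousOn_fderiv_of_isOpen hΩ le_rfl).mono hKΩ)
  have hnhds {y : E} (hy : y ∈ K) : Ω ∈ nhds y := hΩ.mem_nhds (hKΩ hy)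
  exact ⟨max M 0, le_max_right _ _, fun a ha b hb =>
    hKconv.sub_le_fderiv_add_mul_sq
      (fun y hy => ((hU.contDiffAt (hnhds hy)).differentiableAt (by norm_num)).hasFDerivAt
        |>.hasFDerivWithinAt)
      (fun y hy => ((hU'.contDiffAt (hnhds hy)).differentiableAt (by norm_num)).hasFDerivAt
        |>.hasFDerivWithinAt)
      (fun y hy => (hM y hy).trans (le_max_left _ _)) ha hb⟩

theorem add_div_self_mem_Icc {ε t : ℝ} (hε : 0 < ε) (ht : t ∈ Icc (-ε) 0) :
    (t + ε) / ε ∈ Icc (0 : ℝ) 1 :=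
  ⟨div_nonneg (by linarith [ht.1]) hε.le, (div_le_one hε).2 (by linarith [ht.2])⟩

theorem hasDerivAt_add_const_div_self (ε t : ℝ) : HasDerivAt (fun t : ℝ => (t + ε) / ε) ε⁻¹ t := by
  simpa using ((hasDerivAt_id t).add_const ε).div_const ε

theorem dist_le_mul_of_norm_hasDerivAt_le {F : Type*} [NormedAddCommGroup F] [NormedSpace ℝ F]
    {f f' : ℝ → F} {a b C t : ℝ} (hf : ∀ s ∈ Icc a b, HasDerivAt f (f' s) s)
    (hC : ∀ s ∈ Icc a b, ‖f' s‖ ≤ C) (ht : t ∈ Icc a b) : dist (f t) (f b) ≤ C * (b - a) :=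
  calc dist (f t) (f b) ≤ C * ‖t - b‖ := by
        rw [dist_eq_norm]
        exact (convex_Icc a b).norm_image_sub_le_of_norm_hasDerivWithin_le
          (fun s hs => (hf s hs).hasDerivWithinAt) hC (right_mem_Icc.2 (ht.1.trans ht.2)) ht
    _ ≤ C * (b - a) := by
        gcongr
        · exact (norm_nonneg _).trans (hC t ht)
        · rw [Real.norm_of_nonpos (by linarith [ht.2])]
          linarith [ht.1]

theorem add_smul_sub_mem_closedBall {F : Type*} [SeminormedAddCommGroup F] [NormedSpace ℝ F]
    {x y z p : F} {δ s : ℝ} (hy : y ∈ closedBall x (δ / 4)) (hz : z ∈ closedBall x (δ / 4))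
    (hp : dist p y ≤ δ / 4) (hs : s ∈ Icc (0 : ℝ) 1) : p + s • (z - y) ∈ closedBall x δ := by
  rw [mem_closedBall] at *
  calc dist (p + s • (z - y)) x ≤ dist p x + ‖s • (z - y)‖ := by
        rw [dist_eq_norm, dist_eq_norm, add_sub_right_comm]; exact norm_add_le _ _
    _ ≤ (dist p y + dist y x) + dist z y := by
        gcongr
        · exact dist_triangle p y x
        · rw [norm_smul, Real.norm_of_nonneg hs.1, ← dist_eq_norm]
          exact mul_le_of_le_one_left dist_nonneg hs.2
    _ ≤ δ := by linarith [dist_triangle_right z y x]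

section Lagrangian

variable {E : Type*} [NormedAddCommGroup E]

noncomputable def lagrangian (U : E → ℝ) (h : ℝ) (q v : E) : ℝ := ‖v‖ ^ 2 / 2 + U q + h

theorem ContinuousOn.lagrangian {U : E → ℝ} {K : Set E} {I : Set ℝ} {q v : ℝ → E} (h : ℝ)
    (hU : ContinuousOn U K) (hq : ContinuousOn q I) (hv : ContinuousOn v I) (hqK : MapsTo q I K) :
    ContinuousOn (fun t => lagrangian U h (q t) (v t)) I :=
  (((hv.norm.pow 2).div_const 2).add (hU.comp hq hqK)).add continuousOn_const

variable [InnerProductSpace ℝ E] [CompleteSpace E]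

theorem lagrangian_add_smul_sub_le {U : E → ℝ} {h ε s M : ℝ} {q v w : E} (hM : 0 ≤ M)
    (hs : s ∈ Icc (0 : ℝ) 1)
    (hU : U (q + s • w) - U q ≤ fderiv ℝ U q (s • w) + M * ‖s • w‖ ^ 2) :
    lagrangian U h (q + s • w) (v + ε⁻¹ • w) - lagrangian U h q v - (ε⁻¹ ^ 2 / 2 + M) * ‖w‖ ^ 2 ≤
      ε⁻¹ * ⟪v, w⟫ + s * ⟪gradient U q, w⟫ := by
  have hsw : ‖s • w‖ ≤ ‖w‖ := by
    rw [norm_smul, Real.norm_of_nonneg hs.1]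
    exact mul_le_of_le_one_left (norm_nonneg w) hs.2
  replace hU : U (q + s • w) - U q ≤ s * fderiv ℝ U q w + M * ‖w‖ ^ 2 :=
    hU.trans (by rw [map_smul, smul_eq_mul]; gcongr)
  unfold gradient
  rw [InnerProductSpace.toDual_symm_apply]
  simp only [lagrangian, norm_add_sq_real, real_inner_smul_right, norm_smul, mul_pow,
    Real.norm_eq_abs, sq_abs]
  linarith

theorem integral_lagrangian_add_smul_le {U : E → ℝ} {K : Set E} {M h ε : ℝ} {γ γ' : ℝ → E}
    {w : E} (hε : 0 < ε) (hM : 0 ≤ M) (hUc : ContinuousOn U K)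
    (hTaylor : ∀ a ∈ K, ∀ b ∈ K, U b - U a ≤ fderiv ℝ U a (b - a) + M * ‖b - a‖ ^ 2)
    (hγ : ∀ t ∈ Icc (-ε) 0, HasDerivAt γ (γ' t) t)
    (hγ' : ∀ t ∈ Icc (-ε) 0, HasDerivAt γ' (gradient U (γ t)) t)
    (hγK : ∀ t ∈ Icc (-ε) 0, γ t ∈ K)
    (hγwK : ∀ t ∈ Icc (-ε) 0, γ t + ((t + ε) / ε) • w ∈ K) :
    ∫ t in (-ε)..0, lagrangian U h (γ t + ((t + ε) / ε) • w) (γ' t + ε⁻¹ • w) ≤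
      (∫ t in (-ε)..0, lagrangian U h (γ t) (γ' t)) + ⟪γ' 0, w⟫ +
        (1 / (2 * ε) + M * ε) * ‖w‖ ^ 2 := by
  have hderiv : ∀ t ∈ Icc (-ε) 0, HasDerivAt (fun t => (t + ε) / ε * ⟪γ' t, w⟫)
      (ε⁻¹ * ⟪γ' t, w⟫ + (t + ε) / ε * ⟪gradient U (γ t), w⟫) t := by
    intro t ht
    have hv : HasDerivAt (fun t => ⟪γ' t, w⟫) ⟪gradient U (γ t), w⟫ t := by
      simpa using (hγ' t ht).inner ℝ (hasDerivAt_const t w)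
    exact (hasDerivAt_add_const_div_self ε t).mul hv
  have hγc : ContinuousOn γ (Icc (-ε) 0) := fun t ht => (hγ t ht).continuousAt.continuousWithinAt
  have hγ'c : ContinuousOn γ' (Icc (-ε) 0) :=
    fun t ht => (hγ' t ht).continuousAt.continuousWithinAt
  have hLc := hUc.lagrangian h hγc hγ'c hγK
  have hLwc := hUc.lagrangian (q := fun t => γ t + ((t + ε) / ε) • w)
    (v := fun t => γ' t + ε⁻¹ • w) h
    (hγc.add ((by fun_prop : Continuous fun t : ℝ => (t + ε) / ε).continuousOn.smul
      continuousOn_const)) (hγ'c.add continuousOn_const) hγwK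
  have hε0 : -ε ≤ 0 := by linarith
  -- a one-sided fundamental theorem of calculus, so `∇U ∘ γ` need not be integrable
  have key := integral_le_sub_of_hasDeriv_right_of_le (φ := fun t =>
      lagrangian U h (γ t + ((t + ε) / ε) • w) (γ' t + ε⁻¹ • w) - lagrangian U h (γ t) (γ' t)
        - (ε⁻¹ ^ 2 / 2 + M) * ‖w‖ ^ 2) hε0
    (fun t ht => (hderiv t ht).continuousAt.continuousWithinAt)
    (fun t ht => (hderiv t (Ioo_subset_Icc_self ht)).hasDerivWithinAt)
    ((hLwc.sub hLc).sub continuousOn_const).integrableOn_Icc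
    (fun t ht => by
      have ht' := Ioo_subset_Icc_self ht
      exact lagrangian_add_smul_sub_le hM (add_div_self_mem_Icc hε ht')
        (by simpa using hTaylor _ (hγK t ht') _ (hγwK t ht')))
  rw [integral_sub ((hLwc.intervalIntegrable_of_Icc hε0).sub (hLc.intervalIntegrable_of_Icc hε0))
    intervalIntegrable_const, integral_sub (hLwc.intervalIntegrable_of_Icc hε0)
    (hLc.intervalIntegrable_of_Icc hε0), intervalIntegral.integral_const] at key
  have hconst : (0 - -ε) • ((ε⁻¹ ^ 2 / 2 + M) * ‖w‖ ^ 2) = (1 / (2 * ε) + M * ε) * ‖w‖ ^ 2 := by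
    rw [smul_eq_mul]; field_simp; ring
  simp only [hconst, zero_add, div_self hε.ne', one_mul, neg_add_cancel, zero_div, zero_mul,
    sub_zero] at key
  linarith

end Lagrangian

theorem stmt15_general {E : Type*} [NormedAddCommGroup E] [InnerProductSpace ℝ E]
    [FiniteDimensional ℝ E]
    (Ω : Set E) (hΩ : IsOpen Ω) (U : E → ℝ) (hU : ContDiffOn ℝ 2 U Ω)
    (x : E) (δ A h : ℝ) (hδ : 0 < δ) (hA : 0 < A)
    (hball : Metric.closedBall x δ ⊆ Ω)
    (γ γ' : ℝ → E)
    (hγ : ∀ t ≤ (0:ℝ), HasDerivAt γ (γ' t) t)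
    (hγ'' : ∀ t ≤ (0:ℝ), HasDerivAt γ' (gradient U (γ t)) t)
    (hy : γ 0 ∈ Metric.closedBall x (δ / 4))
    (hspeed : ∀ t ∈ Set.Icc (-(δ / 4 / A)) (0:ℝ), ‖γ' t‖ ≤ A)
    (u : E → ℝ) :
    ∃ K > 0, ∀ z ∈ Metric.closedBall x (δ / 4),
      (u z - u (γ (-(δ / 4 / A))) ≤
        ∫ t in (-(δ / 4 / A))..(0:ℝ),
          (‖deriv (fun s => γ s + ((s + δ / 4 / A) / (δ / 4 / A)) • (z - γ 0)) t‖ ^ 2 / 2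
            + U (γ t + ((t + δ / 4 / A) / (δ / 4 / A)) • (z - γ 0)) + h)) →
      (u (γ 0) - u (γ (-(δ / 4 / A))) =
        ∫ t in (-(δ / 4 / A))..(0:ℝ), (‖γ' t‖ ^ 2 / 2 + U (γ t) + h)) →
      u z - u (γ 0) ≤ ⟪γ' 0, z - γ 0⟫ + K * ‖z - γ 0‖ ^ 2 := by
  set ε := δ / 4 / A with hε_def
  have hε : 0 < ε := by positivity
  obtain ⟨M, hM, hTaylor⟩ := hU.exists_sub_le_fderiv_add_mul_sq hΩ (isCompact_closedBall x δ)
    (convex_closedBall x δ) hball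
  refine ⟨1 / (2 * ε) + M * ε, by positivity, fun z hz hz_action hy_action => ?_⟩
  have hγ_near : ∀ t ∈ Icc (-ε) 0, dist (γ t) (γ 0) ≤ δ / 4 := fun t ht =>
    (dist_le_mul_of_norm_hasDerivAt_le (fun s hs => hγ s hs.2) hspeed ht).trans_eq
      (by rw [hε_def, zero_sub, neg_neg]; field_simp)
  have hγ_ball : ∀ t ∈ Icc (-ε) 0, ∀ s ∈ Icc (0 : ℝ) 1, γ t + s • (z - γ 0) ∈ closedBall x δ :=
    fun t ht s hs => add_smul_sub_mem_closedBall hy hz (hγ_near t ht) hs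
  have key := integral_lagrangian_add_smul_le (h := h) (w := z - γ 0) hε hM
    (hU.continuousOn.mono hball) hTaylor (fun t ht => hγ t ht.2) (fun t ht => hγ'' t ht.2)
    (fun t ht => by simpa using hγ_ball t ht 0 (left_mem_Icc.2 zero_le_one))
    (fun t ht => hγ_ball t ht _ (add_div_self_mem_Icc hε ht))
  have hderiv : ∀ t ∈ uIcc (-ε) 0,
      deriv (fun s => γ s + ((s + ε) / ε) • (z - γ 0)) t = γ' t + ε⁻¹ • (z - γ 0) := by
    intro t ht
    rw [uIcc_of_le (neg_nonpos.2 hε.le)] at ht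
    exact ((hγ t ht.2).add ((hasDerivAt_add_const_div_self ε t).smul_const _)).deriv
  rw [integral_congr (g := fun t => lagrangian U h (γ t + ((t + ε) / ε) • (z - γ 0))
    (γ' t + ε⁻¹ • (z - γ 0))) fun t ht => by simp only [lagrangian, hderiv t ht]] at hz_action
  change _ = ∫ t in (-ε)..0, lagrangian U h (γ t) (γ' t) at hy_action
  linarith

/-- Quadratic superdifferentiability from calibration: along a calibrating
curve `γ` of a dominated function `u`, with speed bound `A` and Hessian bound
on the ball, one gets the upper quadratic estimate with supergradient `γ' 0`. -/
theorem stmt15 {E : Type*} [NormedAddCommGroup E] [InnerProductSpace ℝ E]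
    [FiniteDimensional ℝ E]
    (Ω : Set E) (hΩ : IsOpen Ω) (U : E → ℝ) (hU : ContDiffOn ℝ 2 U Ω)
    (x : E) (δ A h : ℝ) (hδ : 0 < δ) (hA : 0 < A) (hh : 0 < h)
    (hball : Metric.closedBall x δ ⊆ Ω)
    (γ γ' : ℝ → E)
    (hγ : ∀ t ≤ (0:ℝ), HasDerivAt γ (γ' t) t)
    (hγ'' : ∀ t ≤ (0:ℝ), HasDerivAt γ' (gradient U (γ t)) t)
    (hγΩ : ∀ t ≤ (0:ℝ), γ t ∈ Ω)
    (hy : γ 0 ∈ Metric.closedBall x (δ / 4))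
    (hspeed : ∀ t ∈ Set.Icc (-(δ / 4 / A)) (0:ℝ), ‖γ' t‖ ≤ A)
    (u : E → ℝ) :
    ∃ K > 0, ∀ z ∈ Metric.closedBall x (δ / 4),
      (u z - u (γ (-(δ / 4 / A))) ≤
        ∫ t in (-(δ / 4 / A))..(0:ℝ),
          (‖deriv (fun s => γ s + ((s + δ / 4 / A) / (δ / 4 / A)) • (z - γ 0)) t‖ ^ 2 / 2
            + U (γ t + ((t + δ / 4 / A) / (δ / 4 / A)) • (z - γ 0)) + h)) →
      (u (γ 0) - u (γ (-(δ / 4 / A))) =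
        ∫ t in (-(δ / 4 / A))..(0:ℝ), (‖γ' t‖ ^ 2 / 2 + U (γ t) + h)) →
      u z - u (γ 0) ≤ ⟪γ' 0, z - γ 0⟫ + K * ‖z - γ 0‖ ^ 2 :=
  stmt15_general Ω hΩ U hU x δ A h hδ hA hball γ γ' hγ hγ'' hy hspeed u
end
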